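/- arXiv:2602.17253 — 2 statements merged into one kernel-verified Lean document; each statement's English description precedes it below -/
import Mathlib

section
/- Let Δ be a d-dimensional simplicial complex with s facets of dimension d and top boundary map ∂_d. Then the symmetric homology polytope P_Δ = conv[∂_d | −∂_d] is combinatorially equivalent to an s-dimensional crosspolytope if and only if H_d(Δ; ℤ) = 0. -/
open Matrix BigOperators Pointwise

/-- An abstract simplicial complex on vertex set `Fin n`. -/
structure SC (n : ℕ) where
  faces : Finset (Finset (Fin n))
  down_closed : ∀ σ ∈ faces, ∀ τ, τ ⊆ σ → τ.Nonempty → τ ∈ faces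
  face_nonempty : ∀ σ ∈ faces, σ.Nonempty

namespace SC

variable {n : ℕ}

/-- `K` is `d`-dimensional. -/
def dimIs (K : SC n) (d : ℕ) : Prop :=
  (∀ σ ∈ K.faces, σ.card ≤ d + 1) ∧ ∃ σ ∈ K.faces, σ.card = d + 1

/-- `K` is pure of dimension `d`. -/
def pure (K : SC n) (d : ℕ) : Prop :=
  ∀ σ ∈ K.faces, ∃ τ ∈ K.faces, σ ⊆ τ ∧ τ.card = d + 1

/-- The `j`-dimensional faces of `K`. -/
abbrev fdex (K : SC n) (j : ℕ) : Type := {σ : Finset (Fin n) // σ ∈ K.faces ∧ σ.card = j + 1}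

end SC

/-- Entry of the simplicial boundary matrix: for a codimension-one subface `τ ⊆ σ`,
the sign `(-1)^k` where `k` is the position of the vertex removed from `σ`. -/
def bEntry {n : ℕ} (τ σ : Finset (Fin n)) : ℤ :=
  if τ ⊆ σ ∧ σ.card = τ.card + 1 then
    ∑ v ∈ σ \ τ, (-1 : ℤ) ^ ((σ.filter fun w => w < v).card)
  else 0

/-- The boundary matrix from `(j+1)`-dimensional faces to `j`-dimensional faces,
i.e. the boundary map `∂_{j+2}`… no: `K.B j` is the map `∂` whose columns are indexed
by the `(j+1)`-faces; in homological notation `K.B (d-1)` is `∂_d`. -/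
def SC.B {n : ℕ} (K : SC n) (j : ℕ) : Matrix (K.fdex j) (K.fdex (j + 1)) ℤ :=
  fun τ σ => bEntry τ.1 σ.1

/-- Strong connectivity of a `(j+1)`-dimensional pure complex: any two facets are
connected by a chain of facets successively sharing a ridge. -/
def SC.StronglyConnected {n : ℕ} (K : SC n) (j : ℕ) : Prop :=
  ∀ a b : K.fdex (j + 1),
    Relation.ReflTransGen (fun σ σ' : K.fdex (j + 1) => (σ.1 ∩ σ'.1).card = j + 1) a b

/-- the number of facets (of a `(j+1)`-dimensional complex) containing a given ridge -/
def SC.ridgeDeg {n : ℕ} (K : SC n) (j : ℕ) (τ : K.fdex j) : ℕ :=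
  (Finset.univ.filter fun σ : K.fdex (j + 1) => τ.1 ⊆ σ.1).card

section Poly

variable {ι κ : Type*} [Fintype ι] [Fintype κ]

def dot (x y : ι → ℝ) : ℝ := ∑ i, x i * y i

/-- the columns of `A` and their negatives, as real vectors -/
def colsPM (A : Matrix ι κ ℤ) : Set (ι → ℝ) :=
  {x | ∃ j : κ, x = (fun i => (A i j : ℝ)) ∨ x = fun i => -(A i j : ℝ)}

/-- the centrally symmetric polytope `conv [A | -A]` -/
def symPoly (A : Matrix ι κ ℤ) : Set (ι → ℝ) := convexHull ℝ (colsPM A)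

def intVec (x : ι → ℝ) : Prop := ∀ i, ∃ z : ℤ, x i = (z : ℝ)

def latticePts (P : Set (ι → ℝ)) : Set (ι → ℝ) := {x ∈ P | intVec x}

/-- a set is a lattice polytope iff it is the convex hull of its lattice points -/
def IsLatticePolytope (Q : Set (ι → ℝ)) : Prop := Q = convexHull ℝ (latticePts Q)

/-- the polar dual, taken within the linear span of `P` -/
def polarIn (P : Set (ι → ℝ)) : Set (ι → ℝ) :=
  {y | y ∈ Submodule.span ℝ P ∧ ∀ x ∈ P, dot x y ≤ 1}

/-- `P` is reflexive: its polar dual (within the affine hull of `P`) is a lattice polytope -/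
def IsReflexive (P : Set (ι → ℝ)) : Prop := IsLatticePolytope (polarIn P)

/-- every lattice point of the span of `P` is an integer combination of lattice points of `P` -/
def IsSpanning (P : Set (ι → ℝ)) : Prop :=
  ∀ x : ι → ℝ, intVec x → x ∈ Submodule.span ℝ P →
    x ∈ (Submodule.span ℤ (latticePts P) : Set (ι → ℝ))

/-- the integer decomposition property -/
def IsIDP (P : Set (ι → ℝ)) : Prop :=
  ∀ k : ℕ, ∀ x : ι → ℝ, intVec x → x ∈ (k : ℝ) • P →
    ∃ f : Fin k → (ι → ℝ), (∀ i, f i ∈ latticePts P) ∧ x = ∑ i, f i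

/-- combinatorial equivalence: an inclusion-order isomorphism between the
posets of exposed faces -/
def CombEquiv (P : Set (ι → ℝ)) (Q : Set (κ → ℝ)) : Prop :=
  Nonempty ({F : Set (ι → ℝ) // IsExposed ℝ P F} ≃o {F : Set (κ → ℝ) // IsExposed ℝ Q F})

/-- unimodular equivalence: an affine isomorphism between the affine hulls which
matches up the two polytopes and the lattice points of the affine hulls -/
def UniEquiv (P : Set (ι → ℝ)) (Q : Set (κ → ℝ)) : Prop :=
  ∃ f : (ι → ℝ) →ᵃ[ℝ] (κ → ℝ),
    Set.BijOn f (affineSpan ℝ P : Set (ι → ℝ)) (affineSpan ℝ Q : Set (κ → ℝ)) ∧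
    f '' P = Q ∧
    (∀ x ∈ (affineSpan ℝ P : Set (ι → ℝ)), intVec x → intVec (f x)) ∧
    (∀ y ∈ (affineSpan ℝ Q : Set (κ → ℝ)), intVec y →
      ∃ x ∈ (affineSpan ℝ P : Set (ι → ℝ)), intVec x ∧ f x = y)

/-- the facets of a polytope: the maximal proper exposed faces -/
def polyFacets (P : Set (ι → ℝ)) : Set (Set (ι → ℝ)) :=
  {F | IsExposed ℝ P F ∧ F ⊂ P ∧ ∀ G, IsExposed ℝ P G → F ⊆ G → G ⊂ P → G = F}

/-- independence of a set of columns of a rational matrix -/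
def colsIndep (A : Matrix ι κ ℚ) (S : Set κ) : Prop :=
  LinearIndependent ℚ (fun j : S => (fun i => A i (j : κ)))

/-- `S` is a basis of the column matroid `M[A]` -/
def IsBasisSet (A : Matrix ι κ ℚ) (S : Set κ) : Prop :=
  colsIndep A S ∧ ∀ S' : Set κ, S ⊆ S' → colsIndep A S' → S' = S

end Poly

/-- the standard cross-polytope -/
def stdCross (s : ℕ) : Set (Fin s → ℝ) :=
  convexHull ℝ {x | ∃ i : Fin s, x = Pi.single i 1 ∨ x = Pi.single i (-1)}

/-- a signed incidence matrix of the cycle on `n` vertices: column `j` is `e_{j+1} - e_j` -/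
def cycMat (n : ℕ) : Matrix (Fin n) (Fin n) ℤ :=
  fun i j => (if (i : ℕ) = ((j : ℕ) + 1) % n then 1 else 0) - (if i = j then 1 else 0)

/-- a signed incidence matrix of the facet-ridge graph of a `(j+1)`-dimensional
pseudomanifold without boundary: rows are facets, columns are ridges, and the two
facets containing a ridge receive opposite signs. -/
noncomputable def SC.frg {n : ℕ} (K : SC n) (j : ℕ) :
    Matrix (K.fdex (j + 1)) (K.fdex j) ℤ :=
  fun σ τ =>
    if τ.1 ⊆ σ.1 then
      (if ∀ σ' : K.fdex (j + 1), τ.1 ⊆ σ'.1 → σ' ≠ σ →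
          (σ'.1 \ τ.1).min ≤ (σ.1 \ τ.1).min then 1 else -1)
    else 0


section AuxStmt5

section ExposedTransfer

variable {E F : Type*} [NormedAddCommGroup E] [NormedSpace ℝ E] [NormedAddCommGroup F]
  [NormedSpace ℝ F] [FiniteDimensional ℝ E] [FiniteDimensional ℝ F]

lemma isExposed_image (T : E →ₗ[ℝ] F) (hT : Function.Injective T)
    {S B : Set E} (hB : IsExposed ℝ S B) : IsExposed ℝ (T '' S) (T '' B) := by
  rintro ⟨_, ⟨b, hb, rfl⟩⟩
  obtain ⟨l, rfl⟩ := hB ⟨b, hb⟩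
  obtain ⟨g, hg⟩ := T.exists_leftInverse_of_injective (LinearMap.ker_eq_bot.2 hT)
  have hgT : ∀ x, g (T x) = x := fun x => congrArg (· x) (congrArg DFunLike.coe hg)
  refine ⟨LinearMap.toContinuousLinearMap ((l : E →ₗ[ℝ] ℝ).comp g), ?_⟩
  ext y
  constructor
  · rintro ⟨x, ⟨hxS, hx⟩, rfl⟩
    refine ⟨⟨x, hxS, rfl⟩, ?_⟩
    rintro z ⟨w, hwS, rfl⟩
    simpa [hgT] using hx w hwS
  · rintro ⟨⟨x, hxS, rfl⟩, hmax⟩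
    refine ⟨x, ⟨hxS, ?_⟩, rfl⟩
    intro w hwS
    simpa [hgT] using hmax (T w) ⟨w, hwS, rfl⟩

lemma isExposed_preimage (T : E →ₗ[ℝ] F) {S : Set E} {G : Set F}
    (hG : IsExposed ℝ (T '' S) G) : IsExposed ℝ S (S ∩ T ⁻¹' G) := by
  rintro ⟨x, hxS, hxG⟩
  obtain ⟨m, hm⟩ := hG ⟨T x, hxG⟩
  refine ⟨m.comp (LinearMap.toContinuousLinearMap T), ?_⟩
  ext z
  constructor
  · rintro ⟨hzS, hzG⟩
    rw [hm] at hzG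
    exact ⟨hzS, fun y hy => hzG.2 (T y) ⟨y, hy, rfl⟩⟩
  · rintro ⟨hzS, hmax⟩
    refine ⟨hzS, ?_⟩
    rw [hm]
    refine ⟨⟨z, hzS, rfl⟩, ?_⟩
    rintro w ⟨y, hy, rfl⟩
    simpa using hmax y hy

noncomputable def exposedOrderIso (T : E →ₗ[ℝ] F) (hT : Function.Injective T) (S : Set E) :
    {B : Set E // IsExposed ℝ S B} ≃o {G : Set F // IsExposed ℝ (T '' S) G} where
  toFun B := ⟨T '' B.1, isExposed_image T hT B.2⟩
  invFun G := ⟨S ∩ T ⁻¹' G.1, isExposed_preimage T G.2⟩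
  left_inv B := by
    ext x
    simp only [Set.mem_inter_iff, Set.mem_preimage]
    constructor
    · rintro ⟨hxS, y, hyB, hxy⟩
      rwa [← hT hxy.symm] at hyB
    · exact fun hx => ⟨B.2.subset hx, x, hx, rfl⟩
  right_inv G := by
    ext y
    simp only [Set.mem_image, Set.mem_inter_iff, Set.mem_preimage]
    constructor
    · rintro ⟨x, ⟨_, hx⟩, rfl⟩
      exact hx
    · intro hy
      obtain ⟨x, hxS, rfl⟩ := G.2.subset hy
      exact ⟨x, ⟨hxS, hy⟩, rfl⟩
  map_rel_iff' {B C} := by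
    simpa using Set.image_subset_image_iff hT (s := B.1) (t := C.1)

end ExposedTransfer

section MatrixLI

variable {ι κ : Type*} [Fintype ι] [Fintype κ] [DecidableEq κ]

lemma det_map_cast (M : Matrix κ κ ℤ) :
    (M.map (Int.cast : ℤ → ℝ)).det = ((M.det : ℤ) : ℝ) := by
  rw [show (M.map (Int.cast : ℤ → ℝ)) = (Int.castRingHom ℝ).mapMatrix M from rfl,
    ← RingHom.map_det]
  rfl

lemma inj_of_li (A : Matrix ι κ ℤ)
    (h : LinearIndependent ℝ (fun q : κ => fun i => (A i q : ℝ))) :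
    Function.Injective A.mulVec := by
  intro v w hvw
  have key := Fintype.linearIndependent_iff.mp h (fun q => ((v q - w q : ℤ) : ℝ)) ?_
  · funext q
    have h3 : ((v q - w q : ℤ) : ℝ) = 0 := key q
    exact sub_eq_zero.mp (by exact_mod_cast h3)
  · funext i
    have h1 : ∑ x, A i x * v x = ∑ x, A i x * w x := congrFun hvw i
    have h2 : ((∑ x, A i x * v x : ℤ) : ℝ) = ((∑ x, A i x * w x : ℤ) : ℝ) := by
      exact_mod_cast congrArg (Int.cast : ℤ → ℝ) h1
    simp only [Finset.sum_apply, Pi.smul_apply, smul_eq_mul, Pi.zero_apply]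
    calc ∑ x, ((v x - w x : ℤ) : ℝ) * (A i x : ℝ)
        = ((∑ x, A i x * v x : ℤ) : ℝ) - ((∑ x, A i x * w x : ℤ) : ℝ) := by
          push_cast
          rw [← Finset.sum_sub_distrib]
          exact Finset.sum_congr rfl fun q _ => by ring
      _ = 0 := by rw [h2, sub_self]

lemma li_of_inj (A : Matrix ι κ ℤ) (h : Function.Injective A.mulVec) :
    LinearIndependent ℝ (fun q : κ => fun i => (A i q : ℝ)) := by
  classical
  set G : Matrix κ κ ℤ := Aᵀ * A with hG
  have hdet : G.det ≠ 0 := by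
    intro h0
    obtain ⟨v, hv, hGv⟩ := Matrix.exists_mulVec_eq_zero_iff.mpr h0
    have hAv : A.mulVec v = 0 := by
      have huu : (A.mulVec v) ⬝ᵥ (A.mulVec v) = 0 := by
        rw [Matrix.dotProduct_mulVec]
        have h4 : (A.mulVec v) ᵥ* A = Aᵀ *ᵥ (A.mulVec v) := by
          rw [Matrix.mulVec_transpose]
        rw [h4, Matrix.mulVec_mulVec, ← hG, hGv, zero_dotProduct]
      funext i
      have hsum : ∑ i, (A.mulVec v) i * (A.mulVec v) i = 0 := huu
      have h5 := (Finset.sum_eq_zero_iff_of_nonneg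
        (fun i _ => mul_self_nonneg ((A.mulVec v) i))).mp hsum i (Finset.mem_univ i)
      exact mul_self_eq_zero.mp h5
    exact hv (h (by rw [hAv, Matrix.mulVec_zero]))
  set Gr : Matrix κ κ ℝ := G.map (Int.cast : ℤ → ℝ) with hGr
  have hdetr : Gr.det ≠ 0 := by
    rw [hGr, det_map_cast]
    exact_mod_cast hdet
  have hinv := Matrix.invertibleOfIsUnitDet Gr (isUnit_iff_ne_zero.mpr hdetr)
  rw [Fintype.linearIndependent_iff]
  intro g hg
  set Ar : Matrix ι κ ℝ := A.map (Int.cast : ℤ → ℝ) with hAr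
  have hAg : Ar.mulVec g = 0 := by
    funext i
    have h6 := congrArg (· i) hg
    simp only [Finset.sum_apply, Pi.smul_apply, smul_eq_mul, Pi.zero_apply] at h6
    simp only [Matrix.mulVec, dotProduct, hAr, Matrix.map_apply, Pi.zero_apply]
    rw [← h6]
    exact Finset.sum_congr rfl fun q _ => mul_comm _ _
  have hGg : Gr.mulVec g = 0 := by
    have hmul : Gr = Arᵀ * Ar := by
      rw [hGr, hG, hAr, ← Matrix.transpose_map]
      exact Matrix.map_mul (f := Int.castRingHom ℝ)
    rw [hmul, ← Matrix.mulVec_mulVec, hAg, Matrix.mulVec_zero]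
  intro q
  have h7 : g = 0 := by
    have h1 : (⅟Gr * Gr).mulVec g = g := by rw [invOf_mul_self, Matrix.one_mulVec]
    rw [← h1, ← Matrix.mulVec_mulVec, hGg, Matrix.mulVec_zero]
  rw [h7]; rfl

end MatrixLI
section Cross
variable {s : ℕ}

lemma single_mem_stdCross (i : Fin s) (c : ℝ) (hc : c = 1 ∨ c = -1) :
    Pi.single i c ∈ stdCross s := by
  apply subset_convexHull
  rcases hc with rfl | rfl
  · exact ⟨i, Or.inl rfl⟩
  · exact ⟨i, Or.inr rfl⟩

lemma stdCross_abs {x : Fin s → ℝ} (hx : x ∈ stdCross s) : ∑ i, |x i| ≤ 1 := by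
  have hconv : Convex ℝ {y : Fin s → ℝ | ∑ i, |y i| ≤ 1} := by
    intro u hu v hv a b ha hb hab
    simp only [Set.mem_setOf_eq] at hu hv ⊢
    calc ∑ i, |(a • u + b • v) i| ≤ ∑ i, (a * |u i| + b * |v i|) := by
          refine Finset.sum_le_sum fun i _ => ?_
          simp only [Pi.add_apply, Pi.smul_apply, smul_eq_mul]
          calc |a * u i + b * v i| ≤ |a * u i| + |b * v i| := abs_add_le _ _
            _ = a * |u i| + b * |v i| := by
                rw [abs_mul, abs_mul, abs_of_nonneg ha, abs_of_nonneg hb]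
      _ = a * ∑ i, |u i| + b * ∑ i, |v i| := by
          rw [Finset.sum_add_distrib, Finset.mul_sum, Finset.mul_sum]
      _ ≤ a * 1 + b * 1 := by
          have := mul_le_mul_of_nonneg_left hu ha
          have := mul_le_mul_of_nonneg_left hv hb
          gcongr
      _ = 1 := by rw [mul_one, mul_one, hab]
  have hgen : {x : Fin s → ℝ | ∃ i : Fin s, x = Pi.single i 1 ∨ x = Pi.single i (-1)} ⊆
      {y : Fin s → ℝ | ∑ i, |y i| ≤ 1} := by
    rintro y ⟨i, hy | hy⟩ <;> subst hy <;>
    · rw [Set.mem_setOf_eq, Finset.sum_eq_single_of_mem i (Finset.mem_univ i)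
        (fun j _ hj => by rw [Pi.single_eq_of_ne hj, abs_zero])]
      simp
  exact convexHull_min hgen hconv hx

/-- the linear functional summing the first `k` coordinates -/
noncomputable def crossCLM (s k : ℕ) : (Fin s → ℝ) →L[ℝ] ℝ :=
  LinearMap.toContinuousLinearMap
    (∑ i ∈ Finset.univ.filter (fun i : Fin s => (i : ℕ) < k), LinearMap.proj i)

lemma crossCLM_apply (k : ℕ) (x : Fin s → ℝ) :
    crossCLM s k x = ∑ i ∈ Finset.univ.filter (fun i : Fin s => (i : ℕ) < k), x i := by
  simp [crossCLM, LinearMap.sum_apply]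

lemma crossCLM_single (k : ℕ) (i : Fin s) (c : ℝ) :
    crossCLM s k (Pi.single i c) = if (i : ℕ) < k then c else 0 := by
  rw [crossCLM_apply, Finset.sum_pi_single']
  simp

lemma crossCLM_le_one (k : ℕ) {x : Fin s → ℝ} (hx : x ∈ stdCross s) :
    crossCLM s k x ≤ 1 := by
  rw [crossCLM_apply]
  calc ∑ i ∈ Finset.univ.filter (fun i : Fin s => (i : ℕ) < k), x i
      ≤ ∑ i ∈ Finset.univ.filter (fun i : Fin s => (i : ℕ) < k), |x i| :=
        Finset.sum_le_sum fun i _ => le_abs_self _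
    _ ≤ ∑ i, |x i| :=
        Finset.sum_le_sum_of_subset_of_nonneg (Finset.filter_subset _ _)
          (fun i _ _ => abs_nonneg _)
    _ ≤ 1 := stdCross_abs hx

/-- the exposed face of the cross-polytope determined by `crossCLM s k` -/
noncomputable def crossFace (s k : ℕ) : Set (Fin s → ℝ) :=
  {x ∈ stdCross s | ∀ y ∈ stdCross s, crossCLM s k y ≤ crossCLM s k x}

lemma crossFace_isExposed (k : ℕ) : IsExposed ℝ (stdCross s) (crossFace s k) :=
  fun _ => ⟨crossCLM s k, rfl⟩

lemma single_mem_crossFace (hs : 0 < s) {k : ℕ} (hk : 1 ≤ k) {i : Fin s} (hik : (i : ℕ) < k) :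
    Pi.single i 1 ∈ crossFace s k := by
  refine ⟨single_mem_stdCross i 1 (Or.inl rfl), fun y hy => ?_⟩
  rw [crossCLM_single, if_pos hik]
  exact crossCLM_le_one k hy

lemma crossFace_val (hs : 0 < s) {k : ℕ} (hk : 1 ≤ k) {x : Fin s → ℝ}
    (hx : x ∈ crossFace s k) : crossCLM s k x = 1 := by
  refine le_antisymm (crossCLM_le_one k hx.1) ?_
  have h0 : crossCLM s k (Pi.single (⟨0, hs⟩ : Fin s) 1) = 1 := by
    rw [crossCLM_single, if_pos (lt_of_lt_of_le Nat.zero_lt_one hk)]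
  rw [← h0]
  exact hx.2 _ (single_mem_stdCross _ 1 (Or.inl rfl))

lemma crossFace_coord_zero (hs : 0 < s) {k : ℕ} (hk : 1 ≤ k) (hks : k < s) {x : Fin s → ℝ}
    (hx : x ∈ crossFace s k) : x ⟨k, hks⟩ = 0 := by
  set i0 : Fin s := ⟨k, hks⟩ with hi0
  have hnotmem : i0 ∉ Finset.univ.filter (fun i : Fin s => (i : ℕ) < k) := by
    simp [hi0]
  have h1 : (1 : ℝ) ≤ ∑ i ∈ Finset.univ.filter (fun i : Fin s => (i : ℕ) < k), |x i| := by
    rw [← crossFace_val hs hk hx, crossCLM_apply]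
    exact Finset.sum_le_sum fun i _ => le_abs_self _
  have h2 : ∑ i ∈ Finset.univ.filter (fun i : Fin s => (i : ℕ) < k), |x i| + |x i0| ≤ 1 := by
    rw [add_comm]
    calc |x i0| + ∑ i ∈ Finset.univ.filter (fun i : Fin s => (i : ℕ) < k), |x i|
        = ∑ i ∈ insert i0 (Finset.univ.filter (fun i : Fin s => (i : ℕ) < k)), |x i| :=
          (Finset.sum_insert (f := fun i => |x i|) hnotmem).symm
      _ ≤ ∑ i, |x i| := Finset.sum_le_sum_of_subset_of_nonneg
          (Finset.subset_univ _) (fun i _ _ => abs_nonneg _)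
      _ ≤ 1 := stdCross_abs hx.1
  have : |x i0| ≤ 0 := by linarith
  exact abs_eq_zero.mp (le_antisymm this (abs_nonneg _))

lemma crossCLM_succ (k : ℕ) (hks : k < s) (x : Fin s → ℝ) :
    crossCLM s (k + 1) x = x ⟨k, hks⟩ + crossCLM s k x := by
  rw [crossCLM_apply, crossCLM_apply]
  have hset : Finset.univ.filter (fun i : Fin s => (i : ℕ) < k + 1) =
      insert (⟨k, hks⟩ : Fin s) (Finset.univ.filter (fun i : Fin s => (i : ℕ) < k)) := by
    ext i
    simp only [Finset.mem_filter, Finset.mem_univ, true_and, Finset.mem_insert]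
    rw [Nat.lt_succ_iff_lt_or_eq]
    constructor
    · rintro (h | h)
      · exact Or.inr h
      · exact Or.inl (Fin.ext h)
    · rintro (h | h)
      · exact Or.inr (by rw [h])
      · exact Or.inl h
  rw [hset, Finset.sum_insert (by simp)]

lemma crossFace_subset_succ (hs : 0 < s) {k : ℕ} (hk : 1 ≤ k) (hks : k < s) :
    crossFace s k ⊆ crossFace s (k + 1) := by
  intro x hx
  have hval : crossCLM s (k + 1) x = 1 := by
    rw [crossCLM_succ k hks, crossFace_coord_zero hs hk hks hx, zero_add,
      crossFace_val hs hk hx]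
  exact ⟨hx.1, fun y hy => by rw [hval]; exact crossCLM_le_one _ hy⟩

lemma crossFace_ssubset_succ (hs : 0 < s) {k : ℕ} (hk : 1 ≤ k) (hks : k < s) :
    crossFace s k ⊂ crossFace s (k + 1) := by
  refine ⟨crossFace_subset_succ hs hk hks, fun hsub => ?_⟩
  have hmem : Pi.single (⟨k, hks⟩ : Fin s) 1 ∈ crossFace s (k + 1) :=
    single_mem_crossFace hs (Nat.le_add_left 1 k) (Nat.lt_succ_self k)
  have hnot : Pi.single (⟨k, hks⟩ : Fin s) 1 ∉ crossFace s k := by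
    intro hmem'
    have := crossFace_val hs hk hmem'
    rw [crossCLM_single, if_neg (by simp)] at this
    norm_num at this
  exact hnot (hsub hmem)

lemma empty_ssubset_crossFace (hs : 0 < s) : (∅ : Set (Fin s → ℝ)) ⊂ crossFace s 1 :=
  (Set.ssubset_iff_of_subset (Set.empty_subset _)).mpr
    ⟨_, single_mem_crossFace (i := ⟨0, hs⟩) hs le_rfl Nat.zero_lt_one,
      Set.notMem_empty _⟩

lemma crossFace_ssubset_top (hs : 0 < s) : crossFace s s ⊂ stdCross s := by
  refine ⟨Set.sep_subset _ _, fun hsub => ?_⟩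
  have hmem : Pi.single (⟨0, hs⟩ : Fin s) (-1) ∈ stdCross s :=
    single_mem_stdCross _ _ (Or.inr rfl)
  have hnot : Pi.single (⟨0, hs⟩ : Fin s) (-1) ∉ crossFace s s := by
    intro hmem'
    have := crossFace_val hs hs hmem'
    rw [crossCLM_single, if_pos hs] at this
    norm_num at this
  exact hnot (hsub hmem)

end Cross

section Chain
variable {ι : Type*} [Fintype ι]

lemma vectorSpan_lt_of_exposed {P F G : Set (ι → ℝ)} (hF : IsExposed ℝ P F)
    (hFne : F.Nonempty) (hGP : G ⊆ P) (hFG : F ⊂ G) :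
    vectorSpan ℝ F < vectorSpan ℝ G := by
  obtain ⟨l, hl⟩ := hF hFne
  obtain ⟨f, hf⟩ := hFne
  obtain ⟨g, hgG, hgF⟩ := Set.exists_of_ssubset hFG
  have hker : vectorSpan ℝ F ≤ LinearMap.ker (l : (ι → ℝ) →ₗ[ℝ] ℝ) := by
    rw [vectorSpan_def, Submodule.span_le]
    rintro v ⟨a, ha, b, hb, rfl⟩
    have hconst : ∀ x ∈ F, ∀ y ∈ F, l x = l y := by
      rw [hl]
      rintro x ⟨hxP, hx⟩ y ⟨hyP, hy⟩
      exact le_antisymm (hy x hxP) (hx y hyP)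
    simp only [SetLike.mem_coe, LinearMap.mem_ker, ContinuousLinearMap.coe_coe]
    rw [vsub_eq_sub, map_sub, hconst a ha b hb, sub_self]
  have hlg : l g < l f := by
    have hgP : g ∈ P := hGP hgG
    have : ¬ (∀ y ∈ P, l y ≤ l g) := by
      intro hmax
      exact hgF (hl ▸ ⟨hgP, hmax⟩)
    push_neg at this
    obtain ⟨y, hyP, hy⟩ := this
    have hfmax : ∀ y ∈ P, l y ≤ l f := (hl ▸ hf : f ∈ {x ∈ P | ∀ y ∈ P, l y ≤ l x}).2
    exact lt_of_lt_of_le hy (hfmax y hyP)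
  refine lt_of_le_of_ne (vectorSpan_mono ℝ hFG.subset) fun heq => ?_
  have hmem : g -ᵥ f ∈ vectorSpan ℝ F := by
    rw [heq]
    exact vsub_mem_vectorSpan ℝ hgG (hFG.subset hf)
  have := hker hmem
  simp only [LinearMap.mem_ker, ContinuousLinearMap.coe_coe, vsub_eq_sub, map_sub] at this
  rw [sub_eq_zero] at this
  exact absurd this (ne_of_lt hlg)

lemma chainRank (P : Set (ι → ℝ)) :
    ∀ m : ℕ, 1 ≤ m → ∀ f : ℕ → Set (ι → ℝ),
      (∀ k, k ≤ m → IsExposed ℝ P (f k)) → (∀ k, k < m → f k ⊂ f (k + 1)) →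
      (f m).Nonempty ∧ m ≤ Module.finrank ℝ (vectorSpan ℝ (f m)) + 1 := by
  intro m
  induction m with
  | zero => intro h; exact absurd h (by norm_num)
  | succ m ih =>
    intro _ f hexp hchain
    rcases Nat.eq_zero_or_pos m with rfl | hm
    · obtain ⟨x, hx, -⟩ := Set.exists_of_ssubset (hchain 0 Nat.zero_lt_one)
      exact ⟨⟨x, hx⟩, by omega⟩
    · obtain ⟨hne, hrank⟩ := ih hm f (fun k hk => hexp k (hk.trans (Nat.le_succ m)))
        (fun k hk => hchain k (hk.trans (Nat.lt_succ_self m)))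
      have hstep := vectorSpan_lt_of_exposed (hexp m (Nat.le_succ m)) hne
        ((hexp (m + 1) le_rfl).subset) (hchain m (Nat.lt_succ_self m))
      have hlt := Submodule.finrank_lt_finrank_of_lt hstep
      constructor
      · obtain ⟨x, hx, -⟩ := Set.exists_of_ssubset (hchain m (Nat.lt_succ_self m))
        exact ⟨x, hx⟩
      · omega

end Chain

end AuxStmt5

/-- Let `Δ` be a `d`-dimensional simplicial complex (`d = j+1 ≥ 1`)
with `s` facets of dimension `d` and top boundary map `∂_d = K.B j`. Then the symmetric
homology polytope `P_Δ` is combinatorially equivalent to an `s`-dimensional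
crosspolytope iff `H_d(Δ; ℤ) = ker ∂_d = 0`. -/
theorem stmt5 (n j s : ℕ) (K : SC n) (hdim : K.dimIs (j + 1))
    (hs : Fintype.card (K.fdex (j + 1)) = s) :
    CombEquiv (symPoly (K.B j)) (stdCross s) ↔
      Function.Injective (K.B j).mulVec := by
  classical
  set A := K.B j with hA
  set c : K.fdex (j + 1) → (K.fdex j → ℝ) := fun q => fun i => (A i q : ℝ) with hc
  have hs0 : 0 < s := by
    obtain ⟨σ, hσ, hcard⟩ := hdim.2
    rw [← hs]
    exact Fintype.card_pos_iff.mpr ⟨⟨σ, hσ, hcard⟩⟩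
  constructor
  · -- combinatorial equivalence implies injectivity
    rintro ⟨iso⟩
    -- the chain of exposed faces of the cross-polytope
    set f' : ℕ → Set (Fin s → ℝ) := fun k =>
      if k = 0 then ∅ else if k ≤ s then crossFace s k else stdCross s with hf'
    have hf0 : f' 0 = ∅ := by simp [hf']
    have hfmid : ∀ k, k ≠ 0 → k ≤ s → f' k = crossFace s k := by
      intro k h1 h2
      simp only [hf']
      rw [if_neg h1, if_pos h2]
    have hftop : f' (s + 1) = stdCross s := by
      simp only [hf']
      rw [if_neg (Nat.succ_ne_zero s), if_neg (by omega : ¬ s + 1 ≤ s)]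
    have hexp' : ∀ k, IsExposed ℝ (stdCross s) (f' k) := by
      intro k
      simp only [hf']
      split_ifs
      · exact isExposed_empty (𝕜 := ℝ)
      · exact crossFace_isExposed k
      · exact IsExposed.refl (𝕜 := ℝ) _
    have hchain' : ∀ k, k < s + 1 → f' k ⊂ f' (k + 1) := by
      intro k hk
      rcases Nat.eq_zero_or_pos k with rfl | hkpos
      · rw [hf0, hfmid 1 one_ne_zero hs0]
        exact empty_ssubset_crossFace hs0
      · rcases Nat.lt_or_ge k s with hks | hks
        · rw [hfmid k (by omega) hks.le, hfmid (k + 1) (by omega) hks]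
          exact crossFace_ssubset_succ hs0 hkpos hks
        · have hkk : k = s := by omega
          subst hkk
          rw [hfmid k (by omega) le_rfl, hftop]
          exact crossFace_ssubset_top hs0
    -- transport the chain to the symmetric polytope
    set f : ℕ → Set (K.fdex j → ℝ) := fun k => (iso.symm ⟨f' k, hexp' k⟩).1 with hf
    have hexp : ∀ k, k ≤ s + 1 → IsExposed ℝ (symPoly A) (f k) := fun k _ =>
      (iso.symm ⟨f' k, hexp' k⟩).2
    have hchain : ∀ k, k < s + 1 → f k ⊂ f (k + 1) := by
      intro k hk
      have hlt : (⟨f' k, hexp' k⟩ : {F // IsExposed ℝ (stdCross s) F}) <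
          ⟨f' (k + 1), hexp' (k + 1)⟩ := by
        rw [← Subtype.coe_lt_coe]
        exact hchain' k hk
      have := iso.symm.lt_iff_lt.mpr hlt
      rw [← Subtype.coe_lt_coe] at this
      exact this
    obtain ⟨hne, hrank⟩ := chainRank (symPoly A) (s + 1) (by omega) f hexp hchain
    -- bound the rank by the span of the columns
    set W : Submodule ℝ (K.fdex j → ℝ) := Submodule.span ℝ (Set.range c) with hW
    have hPW : symPoly A ⊆ (W : Set (K.fdex j → ℝ)) := by
      apply convexHull_min _ W.convex
      rintro x ⟨q, hq | hq⟩
      · subst hq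
        exact Submodule.subset_span ⟨q, rfl⟩
      · subst hq
        have hx : (fun i => -(A i q : ℝ)) = -(c q) := by
          funext i; simp [hc]
        rw [hx]
        exact W.neg_mem (Submodule.subset_span ⟨q, rfl⟩)
    have hFW : f (s + 1) ⊆ (W : Set (K.fdex j → ℝ)) :=
      fun x hx => hPW ((hexp (s + 1) le_rfl).subset hx)
    have hVS : vectorSpan ℝ (f (s + 1)) ≤ W := by
      rw [vectorSpan_def, Submodule.span_le]
      rintro v ⟨a, ha, b, hb, rfl⟩
      exact W.sub_mem (hFW ha) (hFW hb)
    have hsW : s ≤ Module.finrank ℝ W := by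
      have := Submodule.finrank_mono hVS
      omega
    have hli : LinearIndependent ℝ c := by
      have hub : Set.finrank ℝ (Set.range c) ≤ Fintype.card (K.fdex (j + 1)) :=
        finrank_range_le_card c
      rw [hs] at hub
      have heq : Set.finrank ℝ (Set.range c) = Module.finrank ℝ W := rfl
      exact linearIndependent_iff_card_eq_finrank_span.mpr (by omega)
    exact inj_of_li A hli
  · -- injectivity implies combinatorial equivalence
    intro h
    have hli : LinearIndependent ℝ c := li_of_inj A h
    set e : Fin s ≃ K.fdex (j + 1) := (Fintype.equivFinOfCardEq hs).symm with he
    set c' : Fin s → (K.fdex j → ℝ) := fun k => c (e k) with hc'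
    have hli' : LinearIndependent ℝ c' := hli.comp e e.injective
    set T : (Fin s → ℝ) →ₗ[ℝ] (K.fdex j → ℝ) :=
      ∑ k : Fin s, (LinearMap.proj k : (Fin s → ℝ) →ₗ[ℝ] ℝ).smulRight (c' k) with hT
    have hTapp : ∀ x : Fin s → ℝ, T x = ∑ k, x k • c' k := by
      intro x
      rw [hT, LinearMap.sum_apply]
      exact Finset.sum_congr rfl fun k _ => rfl
    have hTsingle : ∀ (i : Fin s) (a : ℝ), T (Pi.single i a) = a • c' i := by
      intro i a
      have hsum : ∑ k, (Pi.single i a : Fin s → ℝ) k • c' k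
          = (Pi.single i a : Fin s → ℝ) i • c' i :=
        Finset.sum_eq_single_of_mem i (Finset.mem_univ i)
          (fun b _ hb => by rw [Pi.single_eq_of_ne hb, zero_smul])
      rw [hTapp, hsum, Pi.single_eq_same]
    have hTinj : Function.Injective T := by
      intro x y hxy
      have h0 : T (x - y) = 0 := by rw [map_sub, hxy, sub_self]
      rw [hTapp] at h0
      have := Fintype.linearIndependent_iff.mp hli' (x - y) h0
      funext k
      have hk := this k
      rw [Pi.sub_apply] at hk
      linarith
    have hImg : T '' stdCross s = symPoly A := by
      rw [stdCross, symPoly, T.image_convexHull]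
      congr 1
      ext x
      constructor
      · rintro ⟨v, ⟨i, hv | hv⟩, rfl⟩
        · subst hv
          exact ⟨e i, Or.inl (by rw [hTsingle, one_smul])⟩
        · subst hv
          refine ⟨e i, Or.inr ?_⟩
          rw [hTsingle]
          funext i'
          simp [hc', hc]
      · rintro ⟨q, hq | hq⟩
        · subst hq
          refine ⟨Pi.single (e.symm q) 1, ⟨e.symm q, Or.inl rfl⟩, ?_⟩
          rw [hTsingle, one_smul, hc']
          show c (e (e.symm q)) = _
          rw [e.apply_symm_apply]
        · subst hq
          refine ⟨Pi.single (e.symm q) (-1), ⟨e.symm q, Or.inr rfl⟩, ?_⟩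
          rw [hTsingle, hc']
          show (-1 : ℝ) • c (e (e.symm q)) = _
          rw [e.apply_symm_apply]
          funext i'
          simp [hc]
    have iso := (exposedOrderIso T hTinj (stdCross s)).symm
    rw [hImg] at iso
    exact ⟨iso⟩
end

section
/- Let Δ be a d-dimensional simplicial complex whose (d−1)-st integral homology group H_{d−1}(Δ; ℤ) has nontrivial torsion. Then neither the symmetric homology polytope P_Δ nor the symmetric cohomology polytope P^Δ has the integer decomposition property. -/
/-!
The lattice points of `conv [∂ | -∂]` and of `conv [∂ᵀ | -∂ᵀ]` are integer multiples of columns: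
since two facets share at most one ridge, every nonzero entry of `∂` or `∂ᵀ` is alone in its
column or isolated from the rest of its row by another row, and this pins a lattice point of the
image of the cross-polytope to a single column. So the integer decomposition property would
make the integer column span saturated in the real one, i.e. the cokernel torsion-free. For `∂` this contradicts the torsion class directly. For `∂ᵀ`,
note that over a PID the cokernel of `M` is torsion-free exactly when `M * G * M = M` for some
`G`, a condition invariant under transposition.
-/

open Matrix BigOperators Pointwise

theorem Submodule.exists_retraction_of_projective_quotient {R M : Type*} [Ring R]
    [AddCommGroup M] [Module R M] (L : Submodule R M) [Module.Projective R (M ⧸ L)] :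
    ∃ ρ : M →ₗ[R] M, (∀ z, ρ z ∈ L) ∧ ∀ z ∈ L, ρ z = z := by
  obtain ⟨s, hs⟩ := L.mkQ.exists_rightInverse_of_surjective L.range_mkQ
  refine ⟨LinearMap.id - s ∘ₗ L.mkQ, fun z => ?_, fun z hz => ?_⟩
  · rw [← Submodule.Quotient.mk_eq_zero]
    simpa [sub_eq_zero] using congr($hs (L.mkQ z)).symm
  · simp [(Submodule.Quotient.mk_eq_zero L).2 hz]

namespace Matrix

variable {ι κ R : Type*} [Fintype κ] [CommRing R]

abbrev cokernel (M : Matrix ι κ R) : Type _ := (ι → R) ⧸ LinearMap.range M.mulVecLin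

theorem mem_range_mulVecLin {M : Matrix ι κ R} {x : ι → R} :
    x ∈ LinearMap.range M.mulVecLin ↔ ∃ c, x = M *ᵥ c := by
  simp [eq_comm]

theorem not_isTorsionFree_cokernel_iff [IsDomain R] {M : Matrix ι κ R} :
    ¬ Module.IsTorsionFree R M.cokernel ↔
      ∃ (x : ι → R) (a : R), a ≠ 0 ∧ (∃ u, a • x = M *ᵥ u) ∧ ¬ ∃ c, x = M *ᵥ c := by
  simp only [Module.isTorsionFree_iff_smul_eq_zero, not_forall, not_or, exists_prop,
    (Submodule.Quotient.mk_surjective _).exists, ← Submodule.Quotient.mk_smul,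
    Submodule.Quotient.mk_eq_zero, mem_range_mulVecLin]
  exact ⟨fun ⟨a, x, hax, ha, hx⟩ => ⟨x, a, ha, hax, hx⟩,
    fun ⟨x, a, ha, hax, hx⟩ => ⟨a, x, hax, ha, hx⟩⟩

theorem isTorsionFree_cokernel_of_mul_mul_eq_self [Fintype ι] [IsDomain R] {M : Matrix ι κ R}
    {G : Matrix κ ι R} (hG : M * G * M = M) : Module.IsTorsionFree R M.cokernel := by
  by_contra h
  obtain ⟨x, a, ha, ⟨u, hu⟩, hx⟩ := not_isTorsionFree_cokernel_iff.1 h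
  refine hx ⟨G *ᵥ x, smul_right_injective _ ha ?_⟩
  calc a • x = M *ᵥ u := hu
    _ = M *ᵥ G *ᵥ M *ᵥ u := by rw [mulVec_mulVec, mulVec_mulVec, hG]
    _ = a • M *ᵥ G *ᵥ x := by rw [← hu, mulVec_smul, mulVec_smul]

theorem exists_mul_mul_eq_self_of_retraction [Fintype ι] {M : Matrix ι κ R}
    (ρ : (ι → R) →ₗ[R] ι → R) (hρ : ∀ z, ρ z ∈ LinearMap.range M.mulVecLin)
    (hρM : ∀ c, ρ (M *ᵥ c) = M *ᵥ c) : ∃ G : Matrix κ ι R, M * G * M = M := by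
  classical
  choose w hw using fun r => mem_range_mulVecLin.1 (hρ (Pi.single r 1))
  have hMG : (M * (of w)ᵀ).mulVecLin = ρ := by
    ext r i
    simp [hw]
  refine ⟨(of w)ᵀ, ext_iff_mulVec.2 fun c => ?_⟩
  rw [← mulVec_mulVec, ← mulVecLin_apply, hMG, hρM]

/- A torsion-free quotient of `ι → R` is free over the PID `R`, hence projective, so the image
of `M` is a direct summand. -/
theorem exists_mul_mul_eq_self_of_isTorsionFree [Fintype ι] [IsDomain R] [IsPrincipalIdealRing R]
    (M : Matrix ι κ R) [Module.IsTorsionFree R M.cokernel] : ∃ G : Matrix κ ι R, M * G * M = M := by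
  obtain ⟨ρ, hρ, hρL⟩ :=
    Submodule.exists_retraction_of_projective_quotient (LinearMap.range M.mulVecLin)
  exact exists_mul_mul_eq_self_of_retraction ρ hρ fun c => hρL _ (mem_range_mulVecLin.2 ⟨c, rfl⟩)

theorem isTorsionFree_cokernel_transpose [Fintype ι] [IsDomain R] [IsPrincipalIdealRing R]
    (M : Matrix ι κ R) [Module.IsTorsionFree R M.cokernel] :
    Module.IsTorsionFree R Mᵀ.cokernel := by
  obtain ⟨G, hG⟩ := M.exists_mul_mul_eq_self_of_isTorsionFree
  refine isTorsionFree_cokernel_of_mul_mul_eq_self (G := Gᵀ) ?_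
  rw [← transpose_mul, ← transpose_mul, ← Matrix.mul_assoc, hG]

theorem isTorsionFree_cokernel_transpose_iff [Fintype ι] [IsDomain R] [IsPrincipalIdealRing R]
    {M : Matrix ι κ R} : Module.IsTorsionFree R Mᵀ.cokernel ↔ Module.IsTorsionFree R M.cokernel :=
  ⟨fun _ => transpose_transpose M ▸ Mᵀ.isTorsionFree_cokernel_transpose,
    fun _ => M.isTorsionFree_cokernel_transpose⟩

end Matrix

/-- The combinatorial shadow of "two facets share at most one ridge", shared by `∂` and `∂ᵀ`. -/
def Matrix.IsSeparating {ι κ R : Type*} [Zero R] (M : Matrix ι κ R) : Prop :=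
  ∀ r j, M r j ≠ 0 →
    (∃ r', M r' j ≠ 0 ∧ ∀ k ≠ j, M r k ≠ 0 → M r' k = 0) ∨ ∀ r' ≠ r, M r' j = 0

section SymPoly

variable {ι κ : Type*} [Fintype κ]

theorem Matrix.mulVec_map_intCast_single [DecidableEq κ] (M : Matrix ι κ ℤ) (k : κ) (a : ℝ) :
    M.map ((↑) : ℤ → ℝ) *ᵥ Pi.single k a = fun i => (M i k : ℝ) * a := by
  ext i; simp [mulVec_single]

theorem sum_abs_pi_single [DecidableEq κ] (k : κ) (a : ℝ) : ∑ j, |Pi.single k a j| = |a| := by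
  simp [Pi.single_apply, apply_ite]

theorem exists_sum_abs_le_one_of_mem_symPoly {M : Matrix ι κ ℤ} {z : ι → ℝ} (hz : z ∈ symPoly M) :
    ∃ μ : κ → ℝ, ∑ k, |μ k| ≤ 1 ∧ z = M.map (↑) *ᵥ μ := by
  classical
  suffices h : symPoly M ⊆ {z | ∃ μ : κ → ℝ, ∑ k, |μ k| ≤ 1 ∧ z = M.map (↑) *ᵥ μ} from h hz
  refine convexHull_min ?_ ?_
  · rintro _ ⟨k, rfl | rfl⟩
    · exact ⟨Pi.single k 1, by simp [sum_abs_pi_single], by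
        simp only [mulVec_map_intCast_single, mul_one]⟩
    · exact ⟨Pi.single k (-1), by simp [sum_abs_pi_single], by
        simp only [mulVec_map_intCast_single, mul_neg_one]⟩
  · rintro _ ⟨μ, hμ, rfl⟩ _ ⟨ν, hν, rfl⟩ a b ha hb hab
    refine ⟨a • μ + b • ν, ?_, by simp only [mulVec_add, mulVec_smul]⟩
    calc ∑ k, |(a • μ + b • ν) k| ≤ ∑ k, (a * |μ k| + b * |ν k|) := by
          gcongr with k
          simpa [abs_mul, abs_of_nonneg ha, abs_of_nonneg hb] using abs_add_le (a * μ k) (b * ν k)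
      _ = a * ∑ k, |μ k| + b * ∑ k, |ν k| := by
          rw [Finset.sum_add_distrib, Finset.mul_sum, Finset.mul_sum]
      _ ≤ 1 := by nlinarith

theorem smul_col_mem_symPoly [DecidableEq κ] (M : Matrix ι κ ℤ) (k : κ) {ε : ℝ} (hε : |ε| ≤ 1) :
    M.map (↑) *ᵥ Pi.single k ε ∈ symPoly M := by
  have hcol (δ : ℝ) (hδ : δ = 1 ∨ δ = -1) : M.map (↑) *ᵥ Pi.single k δ ∈ symPoly M :=
    subset_convexHull ℝ _ ⟨k, by
      rcases hδ with rfl | rfl <;> simp only [mulVec_map_intCast_single, mul_one, mul_neg_one] <;>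
        tauto⟩
  obtain ⟨h₁, h₂⟩ := abs_le.1 hε
  have hseg := convex_convexHull ℝ (colsPM M) (hcol (-1) (.inr rfl)) (hcol 1 (.inl rfl))
    (a := (1 - ε) / 2) (b := (1 + ε) / 2) (by linarith) (by linarith) (by ring)
  rw [symPoly]
  convert hseg using 1
  ext i
  simp only [mulVec_map_intCast_single, Pi.add_apply, Pi.smul_apply, smul_eq_mul]
  ring

theorem mem_symPoly_of_sum_abs_le_one [Nonempty κ] (M : Matrix ι κ ℤ) {μ : κ → ℝ}
    (hμ : ∑ k, |μ k| ≤ 1) : M.map (↑) *ᵥ μ ∈ symPoly M := by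
  classical
  obtain ⟨k₀⟩ := ‹Nonempty κ›
  have h₀ : (0 : ι → ℝ) ∈ symPoly M := by
    simpa using smul_col_mem_symPoly M k₀ (ε := 0) (by simp)
  let w : Option κ → ℝ := fun o => o.elim (1 - ∑ k, |μ k|) fun k => |μ k|
  let p : Option κ → ι → ℝ := fun o =>
    o.elim 0 fun k => M.map (↑) *ᵥ Pi.single k (SignType.sign (μ k) : ℝ)
  have hmem := (convex_convexHull ℝ (colsPM M)).sum_mem (t := Finset.univ) (w := w) (z := p)
    (by rintro (_ | k) - <;> simp [w, hμ]) (by simp [w, Fintype.sum_option])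
    (by
      rintro (_ | k) -
      · exact h₀
      · exact smul_col_mem_symPoly M k (by rcases (SignType.sign (μ k)) with _ | _ | _ <;> simp))
  rw [symPoly]
  convert hmem using 1
  ext i
  simp only [mulVec, dotProduct, map_apply, mulVec_single, op_smul_eq_smul, Finset.sum_apply,
    Pi.smul_apply, smul_eq_mul, Fintype.sum_option, Option.elim_none, Pi.zero_apply, mul_zero,
    Option.elim_some, col_apply, zero_add, w, p]
  refine Finset.sum_congr rfl fun k _ => ?_
  rw [← mul_assoc, abs_mul_sign, mul_comm]

theorem exists_nat_mem_smul_symPoly [Nonempty κ] (M : Matrix ι κ ℤ) (μ : κ → ℝ) :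
    ∃ k : ℕ, M.map (↑) *ᵥ μ ∈ (k : ℝ) • symPoly M := by
  set k : ℕ := ⌈∑ j, |μ j|⌉₊ + 1
  have hk : (0 : ℝ) < k := by positivity
  refine ⟨k, ?_⟩
  convert Set.smul_mem_smul_set (a := (k : ℝ))
    (mem_symPoly_of_sum_abs_le_one M (μ := (k : ℝ)⁻¹ • μ) ?_) using 1
  · rw [mulVec_smul, smul_smul, mul_inv_cancel₀ hk.ne', one_smul]
  · simp only [Pi.smul_apply, smul_eq_mul, abs_mul, abs_inv, abs_of_pos hk, ← Finset.mul_sum]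
    rw [inv_mul_le_one₀ hk]
    exact (Nat.le_ceil _).trans (by norm_cast; omega)

theorem abs_eq_one_of_one_le_abs_sum {a μ : κ → ℝ} (ha : ∀ k, |a k| ≤ 1)
    (hμ : ∑ k, |μ k| ≤ 1) (h : 1 ≤ |∑ k, a k * μ k|) {k : κ} (hk : μ k ≠ 0) : |a k| = 1 := by
  have hle : ∀ j ∈ Finset.univ, 0 ≤ |μ j| * (1 - |a j|) := fun j _ =>
    mul_nonneg (abs_nonneg _) (sub_nonneg.2 (ha j))
  have hsum : ∑ j, |μ j| * (1 - |a j|) = 0 := by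
    refine le_antisymm ?_ (Finset.sum_nonneg hle)
    calc ∑ j, |μ j| * (1 - |a j|) = ∑ j, |μ j| - ∑ j, |a j * μ j| := by
          simp only [mul_sub, mul_one, Finset.sum_sub_distrib, abs_mul, mul_comm]
      _ ≤ 1 - |∑ j, a j * μ j| := by gcongr; exact Finset.abs_sum_le_sum_abs _ _
      _ ≤ 0 := by linarith
  have hk' := (Finset.sum_eq_zero_iff_of_nonneg hle).1 hsum k (Finset.mem_univ k)
  have := (mul_eq_zero.1 hk').resolve_left (abs_ne_zero.2 hk)
  linarith [ha k]

theorem eq_zero_of_one_le_abs_of_sum_abs_le_one {μ : κ → ℝ} (hμ : ∑ k, |μ k| ≤ 1) {j : κ}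
    (hj : 1 ≤ |μ j|) {k : κ} (hk : k ≠ j) : μ k = 0 := by
  have := Finset.add_le_sum (f := fun k => |μ k|) (fun _ _ => abs_nonneg _)
    (Finset.mem_univ j) (Finset.mem_univ k) hk.symm
  exact abs_nonpos_iff.1 (by linarith)

theorem one_le_abs_of_intVec {z : ι → ℝ} (hz : intVec z) {r : ι} (hr : z r ≠ 0) : 1 ≤ |z r| := by
  obtain ⟨m, hm⟩ := hz r
  rw [hm] at hr ⊢
  exact_mod_cast Int.one_le_abs (by exact_mod_cast hr)

theorem ne_zero_of_mulVec_apply_ne_zero {M : Matrix ι κ ℤ} (hM : ∀ r k, |M r k| ≤ 1)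
    {μ : κ → ℝ} (hμ : ∑ k, |μ k| ≤ 1) (hz : intVec (M.map (↑) *ᵥ μ)) {r : ι}
    (hr : (M.map (↑) *ᵥ μ) r ≠ 0) {k : κ} (hk : μ k ≠ 0) : M r k ≠ 0 := fun h => by
  have := abs_eq_one_of_one_le_abs_sum (a := fun k => (M r k : ℝ))
    (fun k => by exact_mod_cast hM r k) hμ (one_le_abs_of_intVec hz hr) hk
  simp [h] at this

theorem mulVec_eq_of_isolating_row {M : Matrix ι κ ℤ} (hM : ∀ r k, |M r k| ≤ 1)
    {μ : κ → ℝ} (hμ : ∑ k, |μ k| ≤ 1) (hz : intVec (M.map (↑) *ᵥ μ)) {r r' : ι} {j : κ}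
    (hsupp : ∀ k, μ k ≠ 0 → M r k ≠ 0) (hj : μ j ≠ 0) (hr'j : M r' j ≠ 0)
    (hr' : ∀ k ≠ j, M r k ≠ 0 → M r' k = 0) :
    M.map (↑) *ᵥ μ = fun s => M s j * μ j := by
  have hzr' : (M.map (↑) *ᵥ μ) r' = M r' j * μ j := by
    refine Fintype.sum_eq_single j fun k hk => ?_
    by_cases hμk : μ k = 0
    · simp [hμk]
    · simp [hr' k hk (hsupp k hμk)]
  have h1 : 1 ≤ |μ j| := by
    have := one_le_abs_of_intVec hz (r := r') (by rw [hzr']; simp [hj, hr'j])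
    rw [hzr', abs_mul] at this
    nlinarith [abs_nonneg (μ j), (show |(M r' j : ℝ)| ≤ 1 by exact_mod_cast hM r' j)]
  ext s
  exact Fintype.sum_eq_single j fun k hk => by
    simp [eq_zero_of_one_le_abs_of_sum_abs_le_one hμ h1 hk]

theorem exists_eq_mulVec_of_mem_latticePts {M : Matrix ι κ ℤ} (hM : ∀ r k, |M r k| ≤ 1)
    (hsep : M.IsSeparating) {z : ι → ℝ} (hz : z ∈ latticePts (symPoly M)) :
    ∃ c : κ → ℤ, z = (↑) ∘ (M *ᵥ c) := by
  classical
  obtain ⟨hzP, hzint⟩ := hz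
  obtain ⟨μ, hμ, rfl⟩ := exists_sum_abs_le_one_of_mem_symPoly hzP
  by_cases hz0 : M.map (↑) *ᵥ μ = 0
  · exact ⟨0, by simp [hz0]⟩
  obtain ⟨r, hr⟩ : ∃ r, (M.map (↑) *ᵥ μ) r ≠ 0 := Function.ne_iff.1 hz0
  obtain ⟨t, ht⟩ := hzint r
  have hsupp : ∀ k, μ k ≠ 0 → M r k ≠ 0 := fun k =>
    ne_zero_of_mulVec_apply_ne_zero hM hμ hzint hr
  have hsq : ∀ s k, M s k ≠ 0 → (M s k : ℝ) * M s k = 1 := fun s k h => by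
    rcases Int.abs_le_one_iff.1 (hM s k) with h' | h' | h' <;> simp_all
  suffices ∃ j, ∀ s, (M.map (↑) *ᵥ μ) s = M s j * (t * M r j) by
    obtain ⟨j, hj⟩ := this
    exact ⟨Pi.single j (t * M r j), by ext s; simp [hj, mulVec_single]⟩
  -- A support column isolated by some row carries all of `μ`; otherwise every support column
  -- lives in row `r` alone.
  by_cases hiso : ∃ j, μ j ≠ 0 ∧ ∃ r', M r' j ≠ 0 ∧ ∀ k ≠ j, M r k ≠ 0 → M r' k = 0
  · obtain ⟨j, hj, r', hr'j, hr'⟩ := hiso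
    have hcol := mulVec_eq_of_isolating_row hM hμ hzint hsupp hj hr'j hr'
    refine ⟨j, fun s => ?_⟩
    rw [hcol, ← ht, hcol]
    linear_combination (-(M s j : ℝ) * μ j) * hsq r j (hsupp j hj)
  · obtain ⟨j, hj⟩ : ∃ j, μ j ≠ 0 := by
      by_contra! h
      exact hr (by simp [mulVec, dotProduct, h])
    have hcol : ∀ k, μ k ≠ 0 → ∀ s ≠ r, M s k = 0 := fun k hk =>
      (hsep r k (hsupp k hk)).resolve_left fun h => hiso ⟨k, hk, h⟩
    refine ⟨j, fun s => ?_⟩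
    by_cases hs : s = r
    · subst hs
      rw [ht]
      linear_combination (-(t : ℝ)) * hsq s j (hsupp j hj)
    · rw [hcol j hj s hs, Int.cast_zero, zero_mul]
      refine Finset.sum_eq_zero fun k _ => ?_
      by_cases hμk : μ k = 0
      · simp [hμk]
      · simp [hcol k hμk s hs]

theorem Matrix.intCast_comp_mulVec (M : Matrix ι κ ℤ) (c : κ → ℤ) :
    ((↑) ∘ (M *ᵥ c) : ι → ℝ) = M.map (↑) *ᵥ ((↑) ∘ c) := by
  ext r; exact RingHom.map_mulVec (Int.castRingHom ℝ) M c r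

theorem not_isIDP_symPoly {M : Matrix ι κ ℤ}
    (hlat : ∀ z ∈ latticePts (symPoly M), ∃ c : κ → ℤ, z = (↑) ∘ (M *ᵥ c))
    (htor : ¬ Module.IsTorsionFree ℤ M.cokernel) : ¬ IsIDP (symPoly M) := by
  intro hidp
  obtain ⟨x, a, ha, ⟨u, hu⟩, hx⟩ := Matrix.not_isTorsionFree_cokernel_iff.1 htor
  have : Nonempty κ := by
    by_contra hκ
    rw [not_nonempty_iff] at hκ
    exact hx ⟨0, smul_right_injective (ι → ℤ) ha (by simp [hu, Subsingleton.elim u 0])⟩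
  have hxR : ((↑) ∘ x : ι → ℝ) = M.map (↑) *ᵥ ((a : ℝ)⁻¹ • ((↑) ∘ u)) := by
    have haR : (a : ℝ) ≠ 0 := by exact_mod_cast ha
    rw [mulVec_smul, ← intCast_comp_mulVec, ← hu, eq_inv_smul_iff₀ haR]
    ext r; simp
  obtain ⟨k, hk⟩ := exists_nat_mem_smul_symPoly M ((a : ℝ)⁻¹ • ((↑) ∘ u))
  rw [← hxR] at hk
  obtain ⟨f, hf, hsum⟩ := hidp k ((↑) ∘ x) (fun r => ⟨x r, rfl⟩) hk
  choose c hc using fun i => hlat (f i) (hf i)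
  refine hx ⟨∑ i, c i, (Int.cast_injective (α := ℝ)).comp_left ?_⟩
  change ((↑) ∘ x : ι → ℝ) = (↑) ∘ (M *ᵥ ∑ i, c i)
  rw [hsum, mulVec_sum]
  ext r
  simp [hc]

end SymPoly

theorem Finset.eq_union_of_card_eq_succ {α : Type*} [DecidableEq α] {s t u : Finset α}
    (hst : s ≠ t) (hcard : s.card = t.card) (hs : s ⊆ u) (ht : t ⊆ u)
    (hu : u.card = s.card + 1) : u = s ∪ t := by
  have hlt : s ⊂ s ∪ t := Finset.ssubset_iff_subset_ne.2 ⟨Finset.subset_union_left, fun h =>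
    hst (Finset.eq_of_subset_of_card_le (h ▸ Finset.subset_union_right) hcard.le).symm⟩
  exact (Finset.eq_of_subset_of_card_le (Finset.union_subset hs ht)
    (by have := Finset.card_lt_card hlt; omega)).symm

theorem abs_bEntry_eq_one {n : ℕ} {τ σ : Finset (Fin n)} (h : τ ⊆ σ ∧ σ.card = τ.card + 1) :
    |bEntry τ σ| = 1 := by
  obtain ⟨v, hv⟩ := Finset.card_eq_one.1
    (show (σ \ τ).card = 1 by rw [Finset.card_sdiff_of_subset h.1, h.2]; omega)
  rw [bEntry, if_pos h, hv, Finset.sum_singleton, abs_pow, abs_neg, abs_one, one_pow]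

theorem abs_bEntry_le_one {n : ℕ} (τ σ : Finset (Fin n)) : |bEntry τ σ| ≤ 1 := by
  by_cases h : τ ⊆ σ ∧ σ.card = τ.card + 1
  · exact (abs_bEntry_eq_one h).le
  · simp [bEntry, if_neg h]

theorem bEntry_ne_zero_iff {n : ℕ} {τ σ : Finset (Fin n)} :
    bEntry τ σ ≠ 0 ↔ τ ⊆ σ ∧ σ.card = τ.card + 1 := by
  refine ⟨fun h => ?_, fun h => abs_ne_zero.1 (by rw [abs_bEntry_eq_one h]; exact one_ne_zero)⟩
  by_contra h'
  exact h (by rw [bEntry, if_neg h'])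

namespace SC

variable {n : ℕ} (K : SC n) {j : ℕ}

theorem B_ne_zero_iff {τ : K.fdex j} {σ : K.fdex (j + 1)} : K.B j τ σ ≠ 0 ↔ τ.1 ⊆ σ.1 := by
  rw [B, bEntry_ne_zero_iff, τ.2.2, σ.2.2, and_iff_left rfl]

theorem eq_of_ridges_subset {τ τ' : K.fdex j} {σ σ' : K.fdex (j + 1)} (hne : τ ≠ τ')
    (hτσ : τ.1 ⊆ σ.1) (hτ'σ : τ'.1 ⊆ σ.1) (hτσ' : τ.1 ⊆ σ'.1) (hτ'σ' : τ'.1 ⊆ σ'.1) :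
    σ = σ' := by
  classical
  have hne' : τ.1 ≠ τ'.1 := Subtype.coe_ne_coe.2 hne
  have hcard : τ.1.card = τ'.1.card := by rw [τ.2.2, τ'.2.2]
  refine Subtype.ext ?_
  rw [Finset.eq_union_of_card_eq_succ hne' hcard hτσ hτ'σ (by rw [σ.2.2, τ.2.2]),
    Finset.eq_union_of_card_eq_succ hne' hcard hτσ' hτ'σ' (by rw [σ'.2.2, τ.2.2])]

theorem B_isSeparating : (K.B j).IsSeparating := by
  intro τ₀ σ h
  rw [B_ne_zero_iff] at h
  obtain ⟨w, hw⟩ : τ₀.1.Nonempty := Finset.card_pos.1 (by rw [τ₀.2.2]; omega)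
  have hcard : (σ.1.erase w).card = j + 1 := by rw [Finset.card_erase_of_mem (h hw), σ.2.2]; rfl
  let τ : K.fdex j := ⟨σ.1.erase w, K.down_closed _ σ.2.1 _ (Finset.erase_subset _ _)
    (Finset.card_pos.1 (by omega)), hcard⟩
  refine .inl ⟨τ, (K.B_ne_zero_iff).2 (Finset.erase_subset _ _), fun σ' hσ' h' => ?_⟩
  have hne : τ₀ ≠ τ := fun e => by simp [e, τ] at hw
  by_contra hτ
  exact hσ' (K.eq_of_ridges_subset hne ((K.B_ne_zero_iff).1 h') ((K.B_ne_zero_iff).1 hτ) h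
    (Finset.erase_subset _ _))

theorem B_transpose_isSeparating : (K.B j)ᵀ.IsSeparating := by
  intro σ₀ τ h
  rw [transpose_apply, B_ne_zero_iff] at h
  by_cases hσ₁ : ∃ σ₁, σ₁ ≠ σ₀ ∧ τ.1 ⊆ σ₁.1
  · obtain ⟨σ₁, hne, hτσ₁⟩ := hσ₁
    refine .inl ⟨σ₁, (K.B_ne_zero_iff).2 hτσ₁, fun τ' hτ' hτ'σ₀ => ?_⟩
    by_contra hτ'σ₁
    exact hne (K.eq_of_ridges_subset (Ne.symm hτ') hτσ₁ ((K.B_ne_zero_iff).1 hτ'σ₁) h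
      ((K.B_ne_zero_iff).1 hτ'σ₀))
  · exact .inr fun σ' hσ' => by
      by_contra h'
      exact hσ₁ ⟨σ', hσ', (K.B_ne_zero_iff).1 h'⟩

end SC

theorem stmt11_general (n i : ℕ) (K : SC n) (x : K.fdex (i + 1) → ℤ)
    (hnot : ¬ ∃ u : K.fdex (i + 2) → ℤ, x = (K.B (i + 1)).mulVec u)
    (q : ℕ) (hq : 0 < q)
    (htor : ∃ u : K.fdex (i + 2) → ℤ, (q : ℤ) • x = (K.B (i + 1)).mulVec u) :
    ¬ IsIDP (symPoly (K.B (i + 1))) ∧ ¬ IsIDP (symPoly (K.B (i + 1))ᵀ) := by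
  have hcoker : ¬ Module.IsTorsionFree ℤ (K.B (i + 1)).cokernel :=
    Matrix.not_isTorsionFree_cokernel_iff.2 ⟨x, q, by exact_mod_cast hq.ne', htor, hnot⟩
  have hentries : ∀ τ σ, |K.B (i + 1) τ σ| ≤ 1 := fun _ _ => abs_bEntry_le_one _ _
  exact ⟨not_isIDP_symPoly
      (fun _ => exists_eq_mulVec_of_mem_latticePts hentries K.B_isSeparating) hcoker,
    not_isIDP_symPoly
      (fun _ => exists_eq_mulVec_of_mem_latticePts (fun σ τ => hentries τ σ)
        K.B_transpose_isSeparating)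
      (Matrix.isTorsionFree_cokernel_transpose_iff.not.2 hcoker)⟩

/-- Let `Δ` be a `d`-dimensional simplicial complex (`d = i+2 ≥ 2`)
whose `(d−1)`-st integral homology `ker ∂_{d−1} / im ∂_d` has nontrivial torsion,
witnessed by a `(d−1)`-cycle `x` not in `im_ℤ ∂_d` with `q • x ∈ im_ℤ ∂_d` for some
`q > 0`. Then neither `P_Δ` nor `P^Δ` has the integer decomposition property. -/
theorem stmt11 (n i : ℕ) (K : SC n) (hdim : K.dimIs (i + 2))
    (x : K.fdex (i + 1) → ℤ)
    (hcyc : (K.B i).mulVec x = 0)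
    (hnot : ¬ ∃ u : K.fdex (i + 2) → ℤ, x = (K.B (i + 1)).mulVec u)
    (q : ℕ) (hq : 0 < q)
    (htor : ∃ u : K.fdex (i + 2) → ℤ, (q : ℤ) • x = (K.B (i + 1)).mulVec u) :
    ¬ IsIDP (symPoly (K.B (i + 1))) ∧ ¬ IsIDP (symPoly (K.B (i + 1))ᵀ) :=
  stmt11_general n i K x hnot q hq htor
end
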